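/- Let D ⊆ ℂ be a nonempty open connected set and let f, h : D → ℂ be holomorphic with nowhere-vanishing derivatives. If S_f = S_h on D, then there exist a, b, c, d ∈ ℂ with a·d − b·c = 1 such that c·f(z) + d ≠ 0 and h(z) = (a·f(z) + b)/(c·f(z) + d) for all z ∈ D; that is, any two locally injective solutions of the Schwarzian equation S = φ differ by post-composition with a Möbius transformation. -/

import Mathlib

/-- The Schwarzian derivative `S_f = (f''/f')' - (1/2)(f''/f')²`. -/
noncomputable def schwarzian (f : ℂ → ℂ) (z : ℂ) : ℂ :=
  deriv (fun w => deriv (deriv f) w / deriv f w) z -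
    (1 / 2) * (deriv (deriv f) z / deriv f z) ^ 2

/-!
The Schwarzian is invariant under post-composition with Möbius transformations, and a Möbius
transformation `M` can be chosen so that `g = M ∘ f` agrees with `h` to second order at a point
`z₀`. It then suffices to show that two functions with the same Schwarzian and the same 2-jet at
`z₀` coincide. With `p = g''/g'` and `q = h''/h'`, the equality `S_g = S_h` reads
`p' - q' = (p - q)(p + q)/2`, while `(g'h')' = (p + q) g'h'`; hence `(p - q)²/(g'h')` is locally
constant, so it vanishes and `p = q`. Then `h'/g'` is constant, equal to `1`, and `h - g` is
constant, equal to `0`. This runs on a ball around `z₀` where `M ∘ f` has no pole; the identity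
theorem carries `h · (c f + d) = a f + b` to all of `D`.
-/

open Set Filter Topology

theorem schwarzian_eq_deriv_logDeriv_deriv (f : ℂ → ℂ) (z : ℂ) :
    schwarzian f z = deriv (logDeriv (deriv f)) z - 1 / 2 * logDeriv (deriv f) z ^ 2 := rfl

theorem logDeriv_mul_self {𝕜 : Type*} [NontriviallyNormedField 𝕜] {φ : 𝕜 → 𝕜} {z : 𝕜}
    (h : φ z ≠ 0) : logDeriv φ z * φ z = deriv φ z :=
  div_mul_cancel₀ _ h

theorem hasDerivAt_logDeriv_deriv {f : ℂ → ℂ} {z : ℂ} (hf : AnalyticAt ℂ f z)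
    (hf' : deriv f z ≠ 0) :
    HasDerivAt (logDeriv (deriv f)) (schwarzian f z + 1 / 2 * logDeriv (deriv f) z ^ 2) z := by
  have hdiff : DifferentiableAt ℂ (logDeriv (deriv f)) z :=
    hf.deriv.deriv.differentiableAt.div hf.deriv.differentiableAt hf'
  refine hdiff.hasDerivAt.congr_deriv ?_
  rw [schwarzian_eq_deriv_logDeriv_deriv]
  ring

section Uniqueness

variable {U : Set ℂ} (hU : IsOpen U) (hUc : IsPreconnected U) {g h : ℂ → ℂ}
  (hg : AnalyticOnNhd ℂ g U) (hh : AnalyticOnNhd ℂ h U)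
  (hg' : ∀ z ∈ U, deriv g z ≠ 0) (hh' : ∀ z ∈ U, deriv h z ≠ 0)
  (hS : EqOn (schwarzian g) (schwarzian h) U) {z₀ : ℂ} (hz₀ : z₀ ∈ U)
include hU hUc hg hh hg' hh' hS hz₀

theorem eqOn_logDeriv_deriv_of_schwarzian_eq
    (h₀ : logDeriv (deriv g) z₀ = logDeriv (deriv h) z₀) :
    EqOn (logDeriv (deriv g)) (logDeriv (deriv h)) U := by
  set p := logDeriv (deriv g)
  set q := logDeriv (deriv h)
  set W : ℂ → ℂ := fun w => (p w - q w) ^ 2 / (deriv g w * deriv h w)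
  have hW : ∀ z ∈ U, HasDerivAt W 0 z := by
    intro z hz
    have hgh : deriv g z * deriv h z ≠ 0 := mul_ne_zero (hg' z hz) (hh' z hz)
    have hg'' := (hg z hz).deriv.differentiableAt.hasDerivAt
    have hh'' := (hh z hz).deriv.differentiableAt.hasDerivAt
    refine ((((hasDerivAt_logDeriv_deriv (hg z hz) (hg' z hz)).sub
      (hasDerivAt_logDeriv_deriv (hh z hz) (hh' z hz))).pow 2).div
        (hg''.mul hh'') hgh).congr_deriv ?_
    rw [hS hz, ← logDeriv_mul_self (hg' z hz), ← logDeriv_mul_self (hh' z hz)]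
    simp only [Pi.sub_apply, Pi.mul_apply, Pi.pow_apply]
    field_simp
    ring
  intro z hz
  have hWz : W z = W z₀ := hU.is_const_of_deriv_eq_zero hUc
    (fun w hw => (hW w hw).differentiableAt.differentiableWithinAt) (fun w hw => (hW w hw).deriv)
    hz hz₀
  have hgh : deriv g z * deriv h z ≠ 0 := mul_ne_zero (hg' z hz) (hh' z hz)
  simpa [W, h₀, hgh, sub_eq_zero] using hWz

theorem eqOn_of_schwarzian_eq (h₀ : g z₀ = h z₀) (h₁ : deriv g z₀ = deriv h z₀)
    (h₂ : logDeriv (deriv g) z₀ = logDeriv (deriv h) z₀) :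
    EqOn g h U := by
  have hlog := eqOn_logDeriv_deriv_of_schwarzian_eq hU hUc hg hh hg' hh' hS hz₀ h₂
  obtain ⟨k, -, hk⟩ := (logDeriv_eqOn_iff hg.deriv.differentiableOn hh.deriv.differentiableOn
    hU hUc hh' hg').mp hlog
  have hk₁ : k = 1 := by
    have hkz₀ := hk hz₀
    simp only [Pi.smul_apply, smul_eq_mul, h₁] at hkz₀
    exact (mul_eq_right₀ (hh' z₀ hz₀)).mp hkz₀.symm
  refine hU.eqOn_of_deriv_eq hUc hg.differentiableOn hh.differentiableOn (fun z hz => ?_) hz₀ h₀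
  simpa [hk₁] using hk hz

end Uniqueness

section Mobius

variable {a b c d : ℂ} {f : ℂ → ℂ}

theorem hasDerivAt_mobius_comp (hdet : a * d - b * c = 1) {f' z : ℂ} (hf : HasDerivAt f f' z)
    (hz : c * f z + d ≠ 0) :
    HasDerivAt (fun w => (a * f w + b) / (c * f w + d)) (f' / (c * f z + d) ^ 2) z := by
  refine (((hf.const_mul a).add_const b).div ((hf.const_mul c).add_const d) hz).congr_deriv ?_
  linear_combination f' * hdet / (c * f z + d) ^ 2

variable {U : Set ℂ} (hf : AnalyticOnNhd ℂ f U) (hdet : a * d - b * c = 1)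
  (hcf : ∀ z ∈ U, c * f z + d ≠ 0)
include hf hdet hcf

theorem eqOn_deriv_mobius_comp :
    EqOn (deriv fun w => (a * f w + b) / (c * f w + d))
      (fun w => deriv f w / (c * f w + d) ^ 2) U :=
  fun z hz => (hasDerivAt_mobius_comp hdet (hf z hz).differentiableAt.hasDerivAt (hcf z hz)).deriv

variable (hU : IsOpen U) (hf' : ∀ z ∈ U, deriv f z ≠ 0)
include hU hf'

theorem eqOn_logDeriv_deriv_mobius_comp :
    EqOn (logDeriv (deriv fun w => (a * f w + b) / (c * f w + d)))
      (fun w => logDeriv (deriv f) w - 2 * (c * deriv f w / (c * f w + d))) U := by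
  intro z hz
  have hden : DifferentiableAt ℂ (fun w => c * f w + d) z :=
    ((hf z hz).differentiableAt.const_mul c).add_const d
  rw [(logDeriv_congr_nhds (eventuallyEq_of_mem (hU.mem_nhds hz)
      (eqOn_deriv_mobius_comp hf hdet hcf))).eq_of_nhds,
    logDeriv_div (g := fun w => (c * f w + d) ^ 2) z (hf' z hz) (pow_ne_zero 2 (hcf z hz))
      (hf z hz).deriv.differentiableAt (hden.pow 2),
    logDeriv_fun_pow hden, logDeriv_apply (fun w => c * f w + d), deriv_add_const,
    deriv_const_mul _ (hf z hz).differentiableAt]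
  norm_num

theorem eqOn_schwarzian_mobius_comp :
    EqOn (schwarzian fun w => (a * f w + b) / (c * f w + d)) (schwarzian f) U := by
  intro z hz
  have hlog := eqOn_logDeriv_deriv_mobius_comp hf hdet hcf hU hf'
  have hf₁ := (hf z hz).differentiableAt.hasDerivAt
  have hf₂ := (hf z hz).deriv.differentiableAt.hasDerivAt
  have hQ : HasDerivAt
      (fun w => logDeriv (deriv f) w - 2 * (c * deriv f w / (c * f w + d))) _ z :=
    (hasDerivAt_logDeriv_deriv (hf z hz) (hf' z hz)).sub
      (((hf₂.const_mul c).div ((hf₁.const_mul c).add_const d) (hcf z hz)).const_mul 2)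
  rw [schwarzian_eq_deriv_logDeriv_deriv,
    (eventuallyEq_of_mem (hU.mem_nhds hz) hlog).deriv_eq, hQ.deriv, hlog hz,
    ← logDeriv_mul_self (hf' z hz)]
  field_simp [hcf z hz]
  ring

theorem eqOn_mobius_comp_of_schwarzian_eq (hUc : IsPreconnected U) {h : ℂ → ℂ}
    (hh : AnalyticOnNhd ℂ h U) (hh' : ∀ z ∈ U, deriv h z ≠ 0)
    (hS : EqOn (schwarzian f) (schwarzian h) U) {z₀ : ℂ} (hz₀ : z₀ ∈ U)
    (h₀ : (a * f z₀ + b) / (c * f z₀ + d) = h z₀)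
    (h₁ : deriv f z₀ / (c * f z₀ + d) ^ 2 = deriv h z₀)
    (h₂ : logDeriv (deriv f) z₀ - 2 * (c * deriv f z₀ / (c * f z₀ + d)) =
      logDeriv (deriv h) z₀) :
    EqOn (fun w => (a * f w + b) / (c * f w + d)) h U := by
  have hderiv := eqOn_deriv_mobius_comp hf hdet hcf
  have hg : AnalyticOnNhd ℂ (fun w => (a * f w + b) / (c * f w + d)) U :=
    ((analyticOnNhd_const.mul hf).add analyticOnNhd_const).div
      ((analyticOnNhd_const.mul hf).add analyticOnNhd_const) hcf
  have hg' : ∀ z ∈ U, deriv (fun w => (a * f w + b) / (c * f w + d)) z ≠ 0 := fun z hz => by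
    rw [hderiv hz]
    exact div_ne_zero (hf' z hz) (pow_ne_zero 2 (hcf z hz))
  exact eqOn_of_schwarzian_eq hU hUc hg hh hg' hh'
    ((eqOn_schwarzian_mobius_comp hf hdet hcf hU hf').trans hS) hz₀ h₀ ((hderiv hz₀).trans h₁)
    ((eqOn_logDeriv_deriv_mobius_comp hf hdet hcf hU hf' hz₀).trans h₂)

end Mobius

/-- `t = c f₀ + d` is a square root of `f₁ / h₁`, and the last condition then determines `c`. -/
theorem exists_mobius_jet_eq {f₀ f₁ h₀ h₁ : ℂ} (p q : ℂ) (hf₁ : f₁ ≠ 0) (hh₁ : h₁ ≠ 0) :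
    ∃ a b c d : ℂ, a * d - b * c = 1 ∧ c * f₀ + d ≠ 0 ∧ (a * f₀ + b) / (c * f₀ + d) = h₀ ∧
      f₁ / (c * f₀ + d) ^ 2 = h₁ ∧ p - 2 * (c * f₁ / (c * f₀ + d)) = q := by
  obtain ⟨t, ht⟩ : ∃ t : ℂ, t ^ 2 = f₁ / h₁ := IsAlgClosed.exists_pow_nat_eq _ two_pos
  have ht₀ : t ≠ 0 := by rintro rfl; simp [eq_comm, hf₁, hh₁] at ht
  set c := (p - q) * t / (2 * f₁) with hc
  refine ⟨(1 + c * h₀ * t) / t, h₀ * t - (1 + c * h₀ * t) / t * f₀, c, t - c * f₀,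
    ?_, ?_, ?_, ?_, ?_⟩
  · field_simp; ring
  · simpa using ht₀
  · rw [add_sub_cancel, add_sub_cancel, mul_div_cancel_right₀ _ ht₀]
  · rw [add_sub_cancel, ht]; field_simp
  · rw [add_sub_cancel, hc]; field_simp; ring

theorem eqOn_mobius_comp_of_eventuallyEq {D : Set ℂ} (hconn : IsPreconnected D) {f h : ℂ → ℂ}
    (hf : AnalyticOnNhd ℂ f D) (hh : AnalyticOnNhd ℂ h D) {a b c d : ℂ}
    (hdet : a * d - b * c = 1) {z₀ : ℂ} (hz₀ : z₀ ∈ D)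
    (hev : (fun w => h w * (c * f w + d)) =ᶠ[𝓝 z₀] fun w => a * f w + b) :
    ∀ z ∈ D, c * f z + d ≠ 0 ∧ h z = (a * f z + b) / (c * f z + d) := by
  intro z hz
  have hl : AnalyticOnNhd ℂ (fun w => h w * (c * f w + d)) D :=
    hh.mul ((analyticOnNhd_const.mul hf).add analyticOnNhd_const)
  have hr : AnalyticOnNhd ℂ (fun w => a * f w + b) D :=
    (analyticOnNhd_const.mul hf).add analyticOnNhd_const
  have hcross : h z * (c * f z + d) = a * f z + b :=
    hl.eqOn_of_preconnected_of_eventuallyEq hr hconn hz₀ hev hz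
  have hden : c * f z + d ≠ 0 := by
    intro h0
    rw [h0, mul_zero] at hcross
    exact one_ne_zero (by linear_combination -hdet + a * h0 + c * hcross : (1 : ℂ) = 0)
  exact ⟨hden, eq_div_of_mul_eq hden hcross⟩

theorem schwarzian_solutions_mobius_equivalent
    (D : Set ℂ) (hD : IsOpen D) (hne : D.Nonempty) (hconn : IsPreconnected D)
    (f h : ℂ → ℂ)
    (hf : DifferentiableOn ℂ f D) (hf' : ∀ z ∈ D, deriv f z ≠ 0)
    (hh : DifferentiableOn ℂ h D) (hh' : ∀ z ∈ D, deriv h z ≠ 0)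
    (heq : ∀ z ∈ D, schwarzian f z = schwarzian h z) :
    ∃ a b c d : ℂ, a * d - b * c = 1 ∧
      ∀ z ∈ D, c * f z + d ≠ 0 ∧ h z = (a * f z + b) / (c * f z + d) := by
  obtain ⟨z₀, hz₀⟩ := hne
  have hfa := hf.analyticOnNhd hD
  have hha := hh.analyticOnNhd hD
  obtain ⟨a, b, c, d, hdet, hden₀, h₀, h₁, h₂⟩ := exists_mobius_jet_eq (f₀ := f z₀) (h₀ := h z₀)
    (logDeriv (deriv f) z₀) (logDeriv (deriv h) z₀) (hf' z₀ hz₀) (hh' z₀ hz₀)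
  refine ⟨a, b, c, d, hdet, eqOn_mobius_comp_of_eventuallyEq hconn hfa hha hdet hz₀ ?_⟩
  have hV : IsOpen (D ∩ (fun z => c * f z + d) ⁻¹' {0}ᶜ) :=
    ((continuousOn_const.mul hf.continuousOn).add continuousOn_const).isOpen_inter_preimage hD
      isOpen_compl_singleton
  obtain ⟨ε, hε, hball⟩ := Metric.isOpen_iff.mp hV z₀ ⟨hz₀, hden₀⟩
  have hBD : Metric.ball z₀ ε ⊆ D := fun z hz => (hball hz).1
  have hcf : ∀ z ∈ Metric.ball z₀ ε, c * f z + d ≠ 0 := fun z hz => (hball hz).2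
  have hgh := eqOn_mobius_comp_of_schwarzian_eq (hfa.mono hBD) hdet hcf Metric.isOpen_ball
    (fun z hz => hf' z (hBD hz)) (convex_ball z₀ ε).isPreconnected (hha.mono hBD)
    (fun z hz => hh' z (hBD hz)) (fun z hz => heq z (hBD hz)) (Metric.mem_ball_self hε) h₀ h₁ h₂
  filter_upwards [Metric.isOpen_ball.mem_nhds (Metric.mem_ball_self hε)] with z hz
  rw [← hgh hz, div_mul_cancel₀ _ (hcf z hz)]
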